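/- arXiv:2209.06819 — 4 statements merged into one kernel-verified Lean document; each statement's English description precedes it below -/
import Mathlib

section
/- In an abstract labelled conflict structure modelling CMV+ choices, there is no ⋆-pattern: there do not exist five steps a,b,c,d,e, each labelled by an unordered interaction between two distinct choices where each choice sits on one of two dual endpoints x or y and every interaction connects an x-choice with a y-choice, such that consecutive steps in the cycle a,b,c,d,e,a share exactly one choice (are in conflict) while non-consecutive steps share no choice. -/
/-- the set of choices involved in a step (modelled as a pair of choices) -/
def ChoiceSet {C : Type*} (s : C × C) : Set C := {s.1, s.2}

/-- a valid CMV+ step: two distinct choices on dual endpoints -/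
def ValidStep {C : Type*} (ep : C → Bool) (s : C × C) : Prop :=
  s.1 ≠ s.2 ∧ ep s.1 ≠ ep s.2

/-- two steps share exactly one choice (are in conflict) -/
def SharesExactlyOne {C : Type*} (s t : C × C) : Prop :=
  ∃! c, c ∈ ChoiceSet s ∩ ChoiceSet t

/-- two steps are distributable: they share no choice -/
def Distributable {C : Type*} (s t : C × C) : Prop :=
  ChoiceSet s ∩ ChoiceSet t = ∅

/-!
Pick a choice `cᵢ` shared by each pair of adjacent steps of the ⋆-pattern. Two consecutive
ones, say the choice shared by `sa, sb` and the one shared by `sb, sc`, both lie in `sb`, and they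
differ because `sa` and `sc` are distributable; since `sb` joins an `x`-choice to a `y`-choice,
they sit on opposite endpoints. So the endpoints alternate along the cycle `c₁, …, c₅`, which is
impossible for a cycle of odd length.
-/

theorem Bool.eq_of_ne_of_ne {a b c : Bool} (hab : a ≠ b) (hbc : b ≠ c) : a = c := by
  rw [← Bool.eq_not_iff] at hab hbc
  rw [hab, hbc, Bool.not_not]

section Steps

variable {C : Type*}

theorem ValidStep.ep_ne_of_mem {ep : C → Bool} {s : C × C} (hs : ValidStep ep s) {c d : C}
    (hc : c ∈ ChoiceSet s) (hd : d ∈ ChoiceSet s) (hcd : c ≠ d) : ep c ≠ ep d := by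
  simp only [ChoiceSet, Set.mem_insert_iff, Set.mem_singleton_iff] at hc hd
  rcases hc with rfl | rfl <;> rcases hd with rfl | rfl
  exacts [absurd rfl hcd, hs.2, hs.2.symm, absurd rfl hcd]

theorem Distributable.symm {s t : C × C} (hst : Distributable s t) : Distributable t s := by
  rwa [Distributable, Set.inter_comm]

theorem Distributable.ne_of_mem {s t : C × C} (hst : Distributable s t) {c d : C}
    (hc : c ∈ ChoiceSet s) (hd : d ∈ ChoiceSet t) : c ≠ d := by
  rintro rfl
  exact Set.eq_empty_iff_forall_notMem.mp hst c ⟨hc, hd⟩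

theorem ep_ne_of_mem_inter_of_distributable {ep : C → Bool} {s t u : C × C}
    (ht : ValidStep ep t) (hsu : Distributable s u) {c d : C}
    (hc : c ∈ ChoiceSet s ∩ ChoiceSet t) (hd : d ∈ ChoiceSet t ∩ ChoiceSet u) :
    ep c ≠ ep d :=
  ht.ep_ne_of_mem hc.2 hd.1 (hsu.ne_of_mem hc.1 hd.2)

end Steps

theorem no_star_pattern_in_CMVmix {C : Type*} (ep : C → Bool)
    (sa sb sc sd se : C × C)
    (hva : ValidStep ep sa) (hvb : ValidStep ep sb) (hvc : ValidStep ep sc)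
    (hvd : ValidStep ep sd) (hve : ValidStep ep se)
    (hab : SharesExactlyOne sa sb) (hbc : SharesExactlyOne sb sc)
    (hcd : SharesExactlyOne sc sd) (hde : SharesExactlyOne sd se)
    (hea : SharesExactlyOne se sa)
    (hac : Distributable sa sc) (had : Distributable sa sd)
    (hbd : Distributable sb sd) (hbe : Distributable sb se)
    (hce : Distributable sc se) :
    False := by
  obtain ⟨c₁, h₁⟩ := hab.exists
  obtain ⟨c₂, h₂⟩ := hbc.exists
  obtain ⟨c₃, h₃⟩ := hcd.exists
  obtain ⟨c₄, h₄⟩ := hde.exists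
  obtain ⟨c₅, h₅⟩ := hea.exists
  have e₁₂ := ep_ne_of_mem_inter_of_distributable hvb hac h₁ h₂
  have e₂₃ := ep_ne_of_mem_inter_of_distributable hvc hbd h₂ h₃
  have e₃₄ := ep_ne_of_mem_inter_of_distributable hvd hce h₃ h₄
  have e₄₅ := ep_ne_of_mem_inter_of_distributable hve had.symm h₄ h₅
  have e₅₁ := ep_ne_of_mem_inter_of_distributable hva hbe.symm h₅ h₁
  exact e₅₁ ((Bool.eq_of_ne_of_ne e₁₂ e₂₃).trans (Bool.eq_of_ne_of_ne e₃₄ e₄₅)).symm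
end

section
/- Composition of operational correspondence: if encodings e₁ : S → M and e₂ : M → T are each operationally complete and sound (up to equivalences that are reduction bisimulations compatible with the encodings), then the composite encoding e₂ ∘ e₁ is operationally complete and sound. -/
variable {S M T : Type*}

/-- the equivalence is a weak reduction bisimulation -/
def RedBisim {P : Type*} (step : P → P → Prop) (eqv : P → P → Prop) : Prop :=
  ∀ p q, eqv p q → ∀ p', Relation.ReflTransGen step p p' →
    ∃ q', Relation.ReflTransGen step q q' ∧ eqv p' q'

/-- operational completeness of an encoding up to a target equivalence -/
def OpComplete {A B : Type*} (stepA : A → A → Prop) (stepB : B → B → Prop)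
    (eqv : B → B → Prop) (e : A → B) : Prop :=
  ∀ s s', Relation.ReflTransGen stepA s s' →
    ∃ t, Relation.ReflTransGen stepB (e s) t ∧ eqv t (e s')

/-- operational soundness of an encoding up to a target equivalence -/
def OpSound {A B : Type*} (stepA : A → A → Prop) (stepB : B → B → Prop)
    (eqv : B → B → Prop) (e : A → B) : Prop :=
  ∀ s t, Relation.ReflTransGen stepB (e s) t →
    ∃ s' t', Relation.ReflTransGen stepA s s' ∧
      Relation.ReflTransGen stepB t t' ∧ eqv t' (e s')

/-! Both completeness and soundness are statements about the relation `ReducesUpTo`, "reduce,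
then be equivalent" (`⇒ ≍`). Because `≍` is a reduction bisimulation this relation is transitive,
and a complete encoding that respects `≍` maps `⇒ ≍` to `⇒ ≍`; the two correspondences therefore
chain through the middle language. -/

def ReducesUpTo {P : Type*} (step : P → P → Prop) (eqv : P → P → Prop) (p q : P) : Prop :=
  ∃ p', Relation.ReflTransGen step p p' ∧ eqv p' q

section Composition

variable {A B C : Type*} {stepA : A → A → Prop} {stepB : B → B → Prop} {stepC : C → C → Prop}
  {eqA : A → A → Prop} {eqB : B → B → Prop} {eqC : C → C → Prop}

theorem ReducesUpTo.trans (hbis : RedBisim stepA eqA) (heq : Equivalence eqA) {a b c : A}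
    (hab : ReducesUpTo stepA eqA a b) (hbc : ReducesUpTo stepA eqA b c) :
    ReducesUpTo stepA eqA a c := by
  obtain ⟨a', haa', ha'b⟩ := hab
  obtain ⟨b', hbb', hb'c⟩ := hbc
  obtain ⟨a'', ha'a'', hb'a''⟩ := hbis b a' (heq.symm ha'b) b' hbb'
  exact ⟨a'', haa'.trans ha'a'', heq.trans (heq.symm hb'a'') hb'c⟩

theorem OpComplete.reducesUpTo_map {e : A → B} (hc : OpComplete stepA stepB eqB e)
    [IsTrans B eqB] (hresp : ∀ a a', eqA a a' → eqB (e a) (e a')) {a a' : A}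
    (h : ReducesUpTo stepA eqA a a') : ReducesUpTo stepB eqB (e a) (e a') := by
  obtain ⟨a₁, haa₁, ha₁a'⟩ := h
  obtain ⟨b, hb, hba₁⟩ := hc a a₁ haa₁
  exact ⟨b, hb, _root_.trans hba₁ (hresp a₁ a' ha₁a')⟩

theorem OpComplete.comp {e₁ : A → B} {e₂ : B → C} (hc₁ : OpComplete stepA stepB eqB e₁)
    (hc₂ : OpComplete stepB stepC eqC e₂) [IsTrans C eqC]
    (hresp : ∀ b b', eqB b b' → eqC (e₂ b) (e₂ b')) :
    OpComplete stepA stepC eqC (e₂ ∘ e₁) :=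
  fun a a' h => hc₂.reducesUpTo_map hresp (hc₁ a a' h)

theorem OpSound.comp {e₁ : A → B} {e₂ : B → C} (hs₁ : OpSound stepA stepB eqB e₁)
    (hs₂ : OpSound stepB stepC eqC e₂) (hc₂ : OpComplete stepB stepC eqC e₂)
    (hbis : RedBisim stepC eqC) (heq : Equivalence eqC)
    (hresp : ∀ b b', eqB b b' → eqC (e₂ b) (e₂ b')) :
    OpSound stepA stepC eqC (e₂ ∘ e₁) := by
  intro a c hc
  obtain ⟨b, c', hb, hcc', hc'b⟩ := hs₂ (e₁ a) c hc
  obtain ⟨a', b', ha', hbb', hb'a'⟩ := hs₁ a b hb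
  have := heq.isTrans
  have hb_a' : ReducesUpTo stepC eqC (e₂ b) (e₂ (e₁ a')) :=
    hc₂.reducesUpTo_map hresp ⟨b', hbb', hb'a'⟩
  obtain ⟨c'', hcc'', hc''a'⟩ := ReducesUpTo.trans hbis heq ⟨c', hcc', hc'b⟩ hb_a'
  exact ⟨a', c'', ha', hcc'', hc''a'⟩

end Composition

theorem operational_correspondence_composes_general
    (stepS : S → S → Prop) (stepM : M → M → Prop) (stepT : T → T → Prop)
    (eqM : M → M → Prop) (eqT : T → T → Prop)
    (heqT : Equivalence eqT)
    (hbisT : RedBisim stepT eqT)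
    (e₁ : S → M) (e₂ : M → T)
    (hc₁ : OpComplete stepS stepM eqM e₁) (hs₁ : OpSound stepS stepM eqM e₁)
    (hc₂ : OpComplete stepM stepT eqT e₂) (hs₂ : OpSound stepM stepT eqT e₂)
    -- e₂ maps ≍_M-equivalent terms to ≍_T-equivalent terms
    (hresp : ∀ m m', eqM m m' → eqT (e₂ m) (e₂ m')) :
    OpComplete stepS stepT eqT (e₂ ∘ e₁) ∧ OpSound stepS stepT eqT (e₂ ∘ e₁) :=
  have := heqT.isTrans
  ⟨hc₁.comp hc₂ hresp, hs₁.comp hs₂ hc₂ hbisT heqT hresp⟩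

theorem operational_correspondence_composes
    (stepS : S → S → Prop) (stepM : M → M → Prop) (stepT : T → T → Prop)
    (eqM : M → M → Prop) (eqT : T → T → Prop)
    (heqM : Equivalence eqM) (heqT : Equivalence eqT)
    (hbisM : RedBisim stepM eqM) (hbisT : RedBisim stepT eqT)
    (e₁ : S → M) (e₂ : M → T)
    (hc₁ : OpComplete stepS stepM eqM e₁) (hs₁ : OpSound stepS stepM eqM e₁)
    (hc₂ : OpComplete stepM stepT eqT e₂) (hs₂ : OpSound stepM stepT eqT e₂)
    -- e₂ maps ≍_M-equivalent terms to ≍_T-equivalent terms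
    (hresp : ∀ m m', eqM m m' → eqT (e₂ m) (e₂ m')) :
    OpComplete stepS stepT eqT (e₂ ∘ e₁) ∧ OpSound stepS stepT eqT (e₂ ∘ e₁) :=
  operational_correspondence_composes_general stepS stepM stepT eqM eqT heqT hbisT e₁ e₂ hc₁ hs₁ hc₂
    hs₂ hresp
end

section
/- Operational correspondence plus barb sensitiveness yields a coupled simulation: if an encoding e is operationally complete and sound up to an equivalence ≍ that is a barb-respecting weak reduction bisimulation, and e is barb-sensitive, then the relation R = {(s, t) | e(s) ⇒ ≍ t or t ⇒ ≍ e(s') for appropriate s ⇒ s'} containing all pairs (s, e(s)) can be chosen so that each source term and its translation are related by coupled simulations in both directions. -/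
variable {S T B : Type*}

def WeakBarb {P : Type*} (step : P → P → Prop) (barb : P → B → Prop)
    (p : P) (β : B) : Prop :=
  ∃ p', Relation.ReflTransGen step p p' ∧ barb p' β

/-- steps in the disjoint-union transition system of source and target -/
def SumStep (stepS : S → S → Prop) (stepT : T → T → Prop) :
    S ⊕ T → S ⊕ T → Prop
  | Sum.inl s, Sum.inl s' => stepS s s'
  | Sum.inr t, Sum.inr t' => stepT t t'
  | _, _ => False

/-- barbs in the disjoint-union system -/
def SumBarb (barbS : S → B → Prop) (barbT : T → B → Prop) :
    S ⊕ T → B → Prop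
  | Sum.inl s, β => barbS s β
  | Sum.inr t, β => barbT t β

/-- coupled simulation on the disjoint-union system -/
def CoupledSim {P : Type*} (step : P → P → Prop) (barb : P → B → Prop)
    (R : P → P → Prop) : Prop :=
  ∀ p q, R p q →
    (∀ p', Relation.ReflTransGen step p p' →
      ∃ q', Relation.ReflTransGen step q q' ∧ R p' q') ∧
    (∀ p', Relation.ReflTransGen step p p' →
      ∃ q', Relation.ReflTransGen step q q' ∧ R q' p') ∧
    (∀ β, WeakBarb step barb p β → WeakBarb step barb q β)

/-!
A source term `s` and a target term `t` are related, in either order, through the relation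
`⇒ ∘ ≍` between `t` and `e s`: `s` on the left when `t` reaches something equivalent to `e s`,
`t` on the left when `t` is equivalent to a reduct of `e s`. For a weak reduction bisimulation `≍`
the relation `⇒ ∘ ≍` is transitive and weak barbs travel backwards along it. Completeness then
answers source moves, soundness lets the target commit back to a source term after any move of
its own, and barb sensitiveness transfers barbs between `s` and `e s`.
-/

open Relation

local infixr:80 " ∘r " => Relation.Comp

def IsWeakReductionSim {P : Type*} (step : P → P → Prop) (R : P → P → Prop) : Prop :=
  ∀ p q, R p q → ∀ p', ReflTransGen step p p' → ∃ q', ReflTransGen step q q' ∧ R p' q'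

theorem WeakBarb.of_reflTransGen {P : Type*} {step : P → P → Prop} {barb : P → B → Prop}
    {p q : P} {β : B} (hpq : ReflTransGen step p q) (hq : WeakBarb step barb q β) :
    WeakBarb step barb p β :=
  let ⟨q', hqq', hb⟩ := hq
  ⟨q', hpq.trans hqq', hb⟩

section ReduceThenEquiv

variable {P : Type*} {step : P → P → Prop} {eqv : P → P → Prop}

theorem comp_of_reflTransGen (heqv : Equivalence eqv) {p q : P} (h : ReflTransGen step p q) :
    (ReflTransGen step ∘r eqv) p q :=
  ⟨q, h, heqv.refl q⟩

theorem comp_of_equiv {p q : P} (h : eqv p q) :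
    (ReflTransGen step ∘r eqv) p q :=
  ⟨p, .refl, h⟩

theorem comp_trans (heqv : Equivalence eqv) (hsim : IsWeakReductionSim step eqv) {p q r : P}
    (hpq : (ReflTransGen step ∘r eqv) p q) (hqr : (ReflTransGen step ∘r eqv) q r) :
    (ReflTransGen step ∘r eqv) p r := by
  obtain ⟨p', hpp', hp'q⟩ := hpq
  obtain ⟨q', hqq', hq'r⟩ := hqr
  obtain ⟨p'', hp'p'', hq'p''⟩ := hsim q p' (heqv.symm hp'q) q' hqq'
  exact ⟨p'', hpp'.trans hp'p'', heqv.trans (heqv.symm hq'p'') hq'r⟩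

theorem WeakBarb.of_comp {barb : P → B → Prop}
    (hbarb : ∀ p q, eqv p q → ∀ β, WeakBarb step barb p β ↔ WeakBarb step barb q β)
    {p q : P} {β : B} (hpq : (ReflTransGen step ∘r eqv) p q) (hq : WeakBarb step barb q β) :
    WeakBarb step barb p β :=
  let ⟨p', hpp', hp'q⟩ := hpq
  .of_reflTransGen hpp' ((hbarb p' q hp'q β).mpr hq)

end ReduceThenEquiv

section DisjointUnion

variable {stepS : S → S → Prop} {stepT : T → T → Prop}

theorem reflTransGen_sumStep_inl_iff {s : S} {p : S ⊕ T} :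
    ReflTransGen (SumStep stepS stepT) (.inl s) p
      ↔ ∃ s', ReflTransGen stepS s s' ∧ p = .inl s' := by
  constructor
  · intro h
    induction h with
    | refl => exact ⟨s, .refl, rfl⟩
    | @tail _ c _ hstep ih =>
      obtain ⟨s', hss', rfl⟩ := ih
      cases c with
      | inl s'' => exact ⟨s'', hss'.tail hstep, rfl⟩
      | inr _ => exact hstep.elim
  · rintro ⟨s', hss', rfl⟩
    exact hss'.lift Sum.inl fun _ _ h => h

theorem reflTransGen_sumStep_inr_iff {t : T} {p : S ⊕ T} :
    ReflTransGen (SumStep stepS stepT) (.inr t) p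
      ↔ ∃ t', ReflTransGen stepT t t' ∧ p = .inr t' := by
  constructor
  · intro h
    induction h with
    | refl => exact ⟨t, .refl, rfl⟩
    | @tail _ c _ hstep ih =>
      obtain ⟨t', htt', rfl⟩ := ih
      cases c with
      | inl _ => exact hstep.elim
      | inr t'' => exact ⟨t'', htt'.tail hstep, rfl⟩
  · rintro ⟨t', htt', rfl⟩
    exact htt'.lift Sum.inr fun _ _ h => h

variable {barbS : S → B → Prop} {barbT : T → B → Prop}

theorem weakBarb_sum_inl {s : S} {β : B} :
    WeakBarb (SumStep stepS stepT) (SumBarb barbS barbT) (.inl s) β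
      ↔ WeakBarb stepS barbS s β := by
  simp only [WeakBarb, reflTransGen_sumStep_inl_iff]
  constructor
  · rintro ⟨_, ⟨s', hss', rfl⟩, hb⟩
    exact ⟨s', hss', hb⟩
  · rintro ⟨s', hss', hb⟩
    exact ⟨.inl s', ⟨s', hss', rfl⟩, hb⟩

theorem weakBarb_sum_inr {t : T} {β : B} :
    WeakBarb (SumStep stepS stepT) (SumBarb barbS barbT) (.inr t) β
      ↔ WeakBarb stepT barbT t β := by
  simp only [WeakBarb, reflTransGen_sumStep_inr_iff]
  constructor
  · rintro ⟨_, ⟨t', htt', rfl⟩, hb⟩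
    exact ⟨t', htt', hb⟩
  · rintro ⟨t', htt', hb⟩
    exact ⟨.inr t', ⟨t', htt', rfl⟩, hb⟩

end DisjointUnion

def correspondenceRel (stepT : T → T → Prop) (eqT : T → T → Prop) (e : S → T) :
    S ⊕ T → S ⊕ T → Prop
  | .inl s, .inr t => (ReflTransGen stepT ∘r eqT) t (e s)
  | .inr t, .inl s => (ReflTransGen stepT ∘r eqT) (e s) t
  | _, _ => False

section Correspondence

variable {stepS : S → S → Prop} {stepT : T → T → Prop} {barbS : S → B → Prop}
  {barbT : T → B → Prop} {e : S → T} {eqT : T → T → Prop}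

theorem exists_comp_encode_of_reflTransGen (heq : Equivalence eqT)
    (hsim : IsWeakReductionSim stepT eqT)
    (hsound : ∀ s t, ReflTransGen stepT (e s) t →
      ∃ s' t', ReflTransGen stepS s s' ∧ ReflTransGen stepT t t' ∧ eqT t' (e s'))
    {s : S} {t t' : T} (ht : (ReflTransGen stepT ∘r eqT) (e s) t)
    (htt' : ReflTransGen stepT t t') :
    ∃ s', ReflTransGen stepS s s' ∧ (ReflTransGen stepT ∘r eqT) t' (e s') := by
  obtain ⟨u, hsu, hut'⟩ := comp_trans heq hsim ht (comp_of_reflTransGen heq htt')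
  obtain ⟨s', u', hss', huu', hu'e⟩ := hsound s u hsu
  exact ⟨s', hss', comp_trans heq hsim (comp_of_equiv (heq.symm hut')) ⟨u', huu', hu'e⟩⟩

theorem coupledSim_correspondenceRel (heq : Equivalence eqT) (hsim : IsWeakReductionSim stepT eqT)
    (hbarb : ∀ t u, eqT t u → ∀ β, WeakBarb stepT barbT t β ↔ WeakBarb stepT barbT u β)
    (hcomplete : ∀ s s', ReflTransGen stepS s s' → (ReflTransGen stepT ∘r eqT) (e s) (e s'))
    (hsound : ∀ s t, ReflTransGen stepT (e s) t →
      ∃ s' t', ReflTransGen stepS s s' ∧ ReflTransGen stepT t t' ∧ eqT t' (e s'))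
    (hsens : ∀ s β, WeakBarb stepS barbS s β ↔ WeakBarb stepT barbT (e s) β) :
    CoupledSim (SumStep stepS stepT) (SumBarb barbS barbT) (correspondenceRel stepT eqT e) := by
  rintro (s | t) (s₀ | t₀) hR
  · exact hR.elim
  · have commit {p'} (hp' : ReflTransGen (SumStep stepS stepT) (.inl s) p') :
        ∃ s' u, p' = .inl s' ∧ ReflTransGen stepT t₀ u ∧ eqT u (e s') := by
      obtain ⟨s', hss', rfl⟩ := reflTransGen_sumStep_inl_iff.mp hp'
      obtain ⟨u, htu, hue⟩ := comp_trans heq hsim hR (hcomplete s s' hss')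
      exact ⟨s', u, rfl, htu, hue⟩
    refine ⟨fun p' hp' => ?_, fun p' hp' => ?_, fun β hβ => ?_⟩
    · obtain ⟨s', u, rfl, htu, hue⟩ := commit hp'
      exact ⟨.inr u, reflTransGen_sumStep_inr_iff.mpr ⟨u, htu, rfl⟩, comp_of_equiv hue⟩
    · obtain ⟨s', u, rfl, htu, hue⟩ := commit hp'
      exact ⟨.inr u, reflTransGen_sumStep_inr_iff.mpr ⟨u, htu, rfl⟩,
        comp_of_equiv (heq.symm hue)⟩
    · rw [weakBarb_sum_inl, hsens] at hβ
      exact weakBarb_sum_inr.mpr (.of_comp hbarb hR hβ)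
  · refine ⟨fun p' hp' => ?_, fun p' hp' => ?_, fun β hβ => ?_⟩
    · obtain ⟨t', htt', rfl⟩ := reflTransGen_sumStep_inr_iff.mp hp'
      exact ⟨.inl s₀, .refl, comp_trans heq hsim hR (comp_of_reflTransGen heq htt')⟩
    · obtain ⟨t', htt', rfl⟩ := reflTransGen_sumStep_inr_iff.mp hp'
      obtain ⟨s', hss', ht'⟩ := exists_comp_encode_of_reflTransGen heq hsim hsound hR htt'
      exact ⟨.inl s', reflTransGen_sumStep_inl_iff.mpr ⟨s', hss', rfl⟩, ht'⟩
    · rw [weakBarb_sum_inr] at hβ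
      exact weakBarb_sum_inl.mpr ((hsens s₀ β).mpr (.of_comp hbarb hR hβ))
  · exact hR.elim

end Correspondence

theorem correspondence_yields_coupled_similarity
    (stepS : S → S → Prop) (stepT : T → T → Prop)
    (barbS : S → B → Prop) (barbT : T → B → Prop)
    (e : S → T) (eqT : T → T → Prop) (heq : Equivalence eqT)
    -- ≍ is a barb-respecting weak reduction bisimulation on T
    (hbis : ∀ t u, eqT t u → ∀ t', Relation.ReflTransGen stepT t t' →
      ∃ u', Relation.ReflTransGen stepT u u' ∧ eqT t' u')
    (hbarb : ∀ t u, eqT t u → ∀ β,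
      WeakBarb stepT barbT t β ↔ WeakBarb stepT barbT u β)
    -- operational completeness
    (hcomplete : ∀ s s', Relation.ReflTransGen stepS s s' →
      ∃ t, Relation.ReflTransGen stepT (e s) t ∧ eqT t (e s'))
    -- operational soundness
    (hsound : ∀ s t, Relation.ReflTransGen stepT (e s) t →
      ∃ s' t', Relation.ReflTransGen stepS s s' ∧
        Relation.ReflTransGen stepT t t' ∧ eqT t' (e s'))
    -- barb sensitiveness
    (hsens : ∀ s β, WeakBarb stepS barbS s β ↔ WeakBarb stepT barbT (e s) β) :
    ∃ R₁ R₂ : S ⊕ T → S ⊕ T → Prop,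
      CoupledSim (SumStep stepS stepT) (SumBarb barbS barbT) R₁ ∧
      CoupledSim (SumStep stepS stepT) (SumBarb barbS barbT) R₂ ∧
      (∀ s, R₁ (Sum.inl s) (Sum.inr (e s))) ∧
      (∀ s, R₂ (Sum.inr (e s)) (Sum.inl s)) := by
  have hcs := coupledSim_correspondenceRel heq hbis hbarb hcomplete hsound hsens
  exact ⟨_, _, hcs, hcs, fun s => comp_of_equiv (heq.refl (e s)),
    fun s => comp_of_equiv (heq.refl (e s))⟩
end

section
/- In the ⋆-pattern of Definition of synchronisation pattern ⋆, the conflict graph on the five steps {a,b,c,d,e} is exactly the 5-cycle, and any assignment of each step to a 2-element set of 'resources' such that steps conflict iff their resource sets intersect requires at least 5 distinct resources. -/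
/-!
Count incidences between steps and resources: the five steps hold `5 * 2 = 10` resources
in total, while a resource held by three steps would make those steps pairwise conflicting,
i.e. a triangle in the 5-cycle. So every resource is held by at most two steps, and at least
`10 / 2 = 5` resources are needed.
-/

/-- cyclic adjacency on the 5-cycle of steps -/
def Adjacent (i j : Fin 5) : Prop := j = i + 1 ∨ j = i - 1

open Finset

lemma Adjacent.not_triangle : ∀ i j k : Fin 5, i ≠ j → i ≠ k → j ≠ k →
    ¬(Adjacent i j ∧ Adjacent i k ∧ Adjacent j k) := by
  unfold Adjacent
  decide

namespace Finset

variable {ι α : Type*} [DecidableEq α]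

theorem card_mul_le_card_biUnion_mul (s : Finset ι) (r : ι → Finset α) {k m : ℕ}
    (hk : ∀ i ∈ s, k ≤ #(r i)) (hm : ∀ x, #{i ∈ s | x ∈ r i} ≤ m) :
    #s * k ≤ #(s.biUnion r) * m := by
  refine card_mul_le_card_mul (fun i x => x ∈ r i) (fun i hi => ?_) (fun x _ => hm x)
  rw [bipartiteAbove, filter_mem_eq_inter, inter_eq_right.mpr (subset_biUnion_of_mem r hi)]
  exact hk i hi

theorem card_filter_mem_le_two_of_triangleFree [Fintype ι] (r : ι → Finset α)
    {G : ι → ι → Prop} (hG : ∀ i j k, i ≠ j → i ≠ k → j ≠ k → ¬(G i j ∧ G i k ∧ G j k))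
    (hconf : ∀ i j, i ≠ j → (r i ∩ r j).Nonempty → G i j) (x : α) :
    #{i | x ∈ r i} ≤ 2 := by
  by_contra! h
  obtain ⟨i, hi, j, hj, k, hk, hij, hik, hjk⟩ := two_lt_card.mp h
  simp only [mem_filter, mem_univ, true_and] at hi hj hk
  have hshare : ∀ a b, a ≠ b → x ∈ r a → x ∈ r b → G a b := fun a b hab ha hb =>
    hconf a b hab ⟨x, mem_inter.mpr ⟨ha, hb⟩⟩
  exact hG i j k hij hik hjk ⟨hshare i j hij hi hj, hshare i k hik hi hk, hshare j k hjk hj hk⟩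

end Finset

theorem star_pattern_needs_five_resources {R : Type*} [DecidableEq R]
    (r : Fin 5 → Finset R)
    (hcard : ∀ i, (r i).card = 2)
    (hconf : ∀ i j : Fin 5, i ≠ j → ((r i ∩ r j).Nonempty ↔ Adjacent i j)) :
    5 ≤ (Finset.univ.biUnion r).card := by
  have hincidences : #(univ : Finset (Fin 5)) * 2 ≤ #(univ.biUnion r) * 2 :=
    card_mul_le_card_biUnion_mul univ r (fun i _ => (hcard i).ge)
      (card_filter_mem_le_two_of_triangleFree r Adjacent.not_triangle
        fun i j hij => (hconf i j hij).mp)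
  simp only [card_univ, Fintype.card_fin] at hincidences
  omega
end
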